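/- Let p be a prime, m ≥ 1, r = p^m, and v = cp for some 1 ≤ c ≤ p^{m-1}. For any monomial η = x^{a_0} y x^{a_1} y ⋯ y x^{a_v} with v occurrences of y and a_0 + ⋯ + a_v = r - v, the number of indices k ∈ {0, 1, …, r-1} such that the monomial (x+ty)^k y (x+ty)^{r-1-k} contributes η with a nonzero t-coefficient is exactly v, and the total coefficient of η in Σ_{k=0}^{r-1} (x+ty)^k y (x+ty)^{r-1-k} is v·t^{v-1}, which vanishes mod p since p | v. -/

import Mathlib

open scoped Classical

open Polynomial

/-- The word `x^{a_0} y x^{a_1} y ⋯ y x^{a_v}` in the free monoid on two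
letters (letter `0` is `x`, letter `1` is `y`), given `a : Fin (v+1) → ℕ`. -/
def etaWord' (v : ℕ) (a : Fin (v + 1) → ℕ) : FreeMonoid (Fin 2) :=
  (FreeMonoid.of (0 : Fin 2)) ^ (a 0) *
    (List.ofFn fun i : Fin v =>
      FreeMonoid.of (1 : Fin 2) * (FreeMonoid.of (0 : Fin 2)) ^ (a i.succ)).prod

/-- The summand `(x + t y)^k · y · (x + t y)^{r-1-k}` in the polynomial ring
over the free associative algebra over `F_p` on `x, y`. -/
noncomputable def summand (p r k : ℕ) : Polynomial (FreeAlgebra (ZMod p) (Fin 2)) :=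
  (C (FreeAlgebra.ι (ZMod p) (0 : Fin 2)) + X * C (FreeAlgebra.ι (ZMod p) (1 : Fin 2))) ^ k *
    C (FreeAlgebra.ι (ZMod p) (1 : Fin 2)) *
    (C (FreeAlgebra.ι (ZMod p) (0 : Fin 2)) + X * C (FreeAlgebra.ι (ZMod p) (1 : Fin 2))) ^
      (r - 1 - k)

/-- The coefficient of the word `w` in an element of the free algebra. -/
noncomputable def wordCoeff (p : ℕ) (z : FreeAlgebra (ZMod p) (Fin 2))
    (w : FreeMonoid (Fin 2)) : ZMod p :=
  ((FreeAlgebra.equivMonoidAlgebraFreeMonoid (R := ZMod p) (X := Fin 2)) z).coeff w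

/-!
Expanding `(x + t y)^k y (x + t y)^(r-1-k)` letter by letter writes it as the sum of the monomials
`t^(#y(w) - 1) w` over the words `w` of length `r` whose letter in position `k` is `y`, each with
coefficient `1`: the word determines the choice made in every factor, and only the middle `y`
carries no `t`. So a word of length `r` with `v` letters `y` occurs exactly in the summands indexed
by its `v` positions of `y`, always in `t`-degree `v - 1`, and the whole sum contributes `v t^(v-1)`.
-/

open Finset

section ListDecomposition

variable {α : Type*}

lemma ofFn_append_cons_injective {k n : ℕ} (b : α) :
    Function.Injective fun fg : (Fin k → α) × (Fin n → α) =>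
      List.ofFn fg.1 ++ b :: List.ofFn fg.2 := by
  rintro ⟨f, g⟩ ⟨f', g'⟩ h
  obtain ⟨hf, hg⟩ := List.append_inj h (by simp)
  exact Prod.ext (List.ofFn_injective hf) (List.ofFn_injective (List.cons_injective hg))

lemma exists_ofFn_append_cons_eq_iff {k n : ℕ} (b : α) {L : List α}
    (hL : L.length = k + 1 + n) :
    (∃ fg : (Fin k → α) × (Fin n → α), List.ofFn fg.1 ++ b :: List.ofFn fg.2 = L) ↔
      L[k]? = some b := by
  constructor
  · rintro ⟨⟨f, g⟩, rfl⟩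
    simp
  · intro hb
    refine ⟨(fun j => L[(j : ℕ)], fun j => L[k + 1 + (j : ℕ)]), ?_⟩
    apply List.ext_getElem (by simp; omega)
    intro i hi _
    simp only [List.getElem_append, List.getElem_cons, List.getElem_ofFn, List.length_ofFn]
    split_ifs with h1 h2
    · rfl
    · rw [List.getElem?_eq_some_iff] at hb
      grind
    · congr 1; omega

lemma card_filter_ofFn_append_cons_eq [Fintype α] [DecidableEq α] {k n : ℕ} (b : α) {L : List α}
    (hL : L.length = k + 1 + n) :
    #{fg : (Fin k → α) × (Fin n → α) | List.ofFn fg.1 ++ b :: List.ofFn fg.2 = L} =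
      if L[k]? = some b then 1 else 0 := by
  split_ifs with hb
  · obtain ⟨fg, hfg⟩ := (exists_ofFn_append_cons_eq_iff b hL).2 hb
    refine card_eq_one.2 ⟨fg, ?_⟩
    ext fg'
    simpa [← hfg] using (ofFn_append_cons_injective b).eq_iff
  · rw [card_eq_zero, filter_eq_empty_iff]
    exact fun fg _ h => hb ((exists_ofFn_append_cons_eq_iff b hL).1 ⟨fg, h⟩)

lemma card_filter_getElem?_eq [DecidableEq α] (L : List α) (b : α) :
    #{k ∈ range L.length | L[k]? = some b} = L.count b := by
  induction L with
  | nil => simp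
  | cons a L ih =>
    rw [card_filter, List.length_cons, sum_range_succ', ← card_filter, List.count_cons]
    simp only [List.getElem?_cons_succ, List.getElem?_cons_zero, ih, Option.some.injEq]
    grind

end ListDecomposition

lemma FreeMonoid.toList_of_pow {α : Type*} (a : α) (n : ℕ) :
    (FreeMonoid.of a ^ n).toList = List.replicate n a := by
  induction n with
  | zero => rfl
  | succ n ih => rw [pow_succ, FreeMonoid.toList_mul, ih, List.replicate_succ']; rfl

lemma toList_etaWord' (v : ℕ) (a : Fin (v + 1) → ℕ) :
    (etaWord' v a).toList = List.replicate (a 0) 0 ++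
      (List.ofFn fun i : Fin v => (1 : Fin 2) :: List.replicate (a i.succ) 0).flatten := by
  simp [etaWord', FreeMonoid.toList_prod, FreeMonoid.toList_of_pow, List.map_ofFn,
    Function.comp_def]

lemma length_toList_etaWord' (v : ℕ) (a : Fin (v + 1) → ℕ) :
    (etaWord' v a).toList.length = ∑ i, a i + v := by
  simp [toList_etaWord', List.sum_ofFn, Fin.sum_univ_succ, sum_add_distrib, add_assoc]

lemma count_toList_etaWord' (v : ℕ) (a : Fin (v + 1) → ℕ) :
    (etaWord' v a).toList.count 1 = v := by
  simp [toList_etaWord', List.count_flatten, List.count_replicate, Function.comp_def]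

noncomputable section

variable (p : ℕ)

def ofWord : FreeMonoid (Fin 2) →* FreeAlgebra (ZMod p) (Fin 2) :=
  FreeMonoid.lift (FreeAlgebra.ι (ZMod p))

lemma equivMonoidAlgebraFreeMonoid_ofWord (w : FreeMonoid (Fin 2)) :
    FreeAlgebra.equivMonoidAlgebraFreeMonoid (ofWord p w) = MonoidAlgebra.of (ZMod p) _ w := by
  have : ((FreeAlgebra.equivMonoidAlgebraFreeMonoid (R := ZMod p) (X := Fin 2)).toRingEquiv
      |>.toMonoidHom).comp (ofWord p) =
      MonoidAlgebra.of (ZMod p) _ :=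
    FreeMonoid.hom_eq fun b => by simp [ofWord, FreeAlgebra.equivMonoidAlgebraFreeMonoid]
  exact DFunLike.congr_fun this w

lemma wordCoeff_ofWord (w w' : FreeMonoid (Fin 2)) :
    wordCoeff p (ofWord p w) w' = if w = w' then 1 else 0 := by
  simp [wordCoeff, equivMonoidAlgebraFreeMonoid_ofWord, MonoidAlgebra.coeff_single,
    Finsupp.single_apply]

lemma wordCoeff_sum {ι : Type*} (s : Finset ι) (z : ι → FreeAlgebra (ZMod p) (Fin 2))
    (w : FreeMonoid (Fin 2)) :
    wordCoeff p (∑ i ∈ s, z i) w = ∑ i ∈ s, wordCoeff p (z i) w := by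
  simp only [wordCoeff, map_sum, MonoidAlgebra.coeff_sum]
  exact Finset.sum_apply' w

def wordMonomial (i : ℕ) (L : List (Fin 2)) : (FreeAlgebra (ZMod p) (Fin 2))[X] :=
  monomial i (ofWord p (FreeMonoid.ofList L))

lemma wordMonomial_mul (i j : ℕ) (L M : List (Fin 2)) :
    wordMonomial p i L * wordMonomial p j M = wordMonomial p (i + j) (L ++ M) := by
  simp [wordMonomial, monomial_mul_monomial, FreeMonoid.ofList_append]

lemma wordCoeff_coeff_wordMonomial (i j : ℕ) (L M : List (Fin 2)) :
    wordCoeff p ((wordMonomial p i L).coeff j) (FreeMonoid.ofList M) =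
      if i = j ∧ L = M then 1 else 0 := by
  rw [wordMonomial, coeff_monomial]
  by_cases hij : i = j
  · simp [hij, wordCoeff_ofWord, FreeMonoid.ofList.injective.eq_iff]
  · simp [hij, wordCoeff]

lemma x_add_t_mul_y_eq :
    C (FreeAlgebra.ι (ZMod p) (0 : Fin 2)) + X * C (FreeAlgebra.ι (ZMod p) (1 : Fin 2)) =
      ∑ b : Fin 2, wordMonomial p ([b].count 1) [b] := by
  simp [wordMonomial, ofWord, Fin.sum_univ_two, ← C_mul_X_eq_monomial, X_mul_C]

lemma x_add_t_mul_y_pow (n : ℕ) :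
    (C (FreeAlgebra.ι (ZMod p) (0 : Fin 2)) + X * C (FreeAlgebra.ι (ZMod p) (1 : Fin 2))) ^ n =
      ∑ f : Fin n → Fin 2, wordMonomial p ((List.ofFn f).count 1) (List.ofFn f) := by
  induction n with
  | zero => simp [wordMonomial]
  | succ n ih =>
    rw [pow_succ', ih, x_add_t_mul_y_eq, sum_mul_sum, ← Fintype.sum_prod_type']
    refine Fintype.sum_equiv (Fin.consEquiv fun _ => Fin 2) _ _ fun bf => ?_
    simp [wordMonomial_mul, Fin.consEquiv, List.ofFn_succ, List.count_cons, add_comm]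

lemma summand_eq_sum (r k : ℕ) :
    summand p r k = ∑ fg : (Fin k → Fin 2) × (Fin (r - 1 - k) → Fin 2),
      wordMonomial p ((List.ofFn fg.1).count 1 + (List.ofFn fg.2).count 1)
        (List.ofFn fg.1 ++ 1 :: List.ofFn fg.2) := by
  have hy : C (FreeAlgebra.ι (ZMod p) (1 : Fin 2)) = wordMonomial p 0 [1] := by
    simp [wordMonomial, ofWord]
  rw [summand, x_add_t_mul_y_pow, x_add_t_mul_y_pow, hy, sum_mul, sum_mul_sum,
    ← Fintype.sum_prod_type']
  simp [wordMonomial_mul]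

lemma wordCoeff_coeff_summand {r k : ℕ} (hk : k < r) (i : ℕ) {L : List (Fin 2)}
    (hL : L.length = r) :
    wordCoeff p ((summand p r k).coeff i) (FreeMonoid.ofList L) =
      if L[k]? = some 1 ∧ i = L.count 1 - 1 then 1 else 0 := by
  rw [summand_eq_sum, finsetSum_coeff, wordCoeff_sum]
  have hcond : ∀ fg : (Fin k → Fin 2) × (Fin (r - 1 - k) → Fin 2),
      ((List.ofFn fg.1).count 1 + (List.ofFn fg.2).count 1 = i ∧
        List.ofFn fg.1 ++ 1 :: List.ofFn fg.2 = L) ↔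
      (List.ofFn fg.1 ++ 1 :: List.ofFn fg.2 = L ∧ i = L.count 1 - 1) := by
    rintro ⟨f, g⟩
    constructor <;> rintro ⟨rfl, rfl⟩ <;> simp [List.count_append]
  simp only [wordCoeff_coeff_wordMonomial, hcond]
  by_cases hi : i = L.count 1 - 1
  · simp only [hi, and_true]
    rw [sum_boole, card_filter_ofFn_append_cons_eq (1 : Fin 2) (by omega)]
    split_ifs <;> simp
  · simp [hi]

lemma card_filter_exists_wordCoeff_coeff_summand_ne_zero [Fact (1 < p)] {r : ℕ}
    {L : List (Fin 2)} (hL : L.length = r) :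
    #{k ∈ range r | ∃ i, wordCoeff p ((summand p r k).coeff i) (FreeMonoid.ofList L) ≠ 0} =
      L.count 1 := by
  rw [← card_filter_getElem?_eq, hL]
  refine congrArg card (filter_congr fun k hk => ?_)
  simp [wordCoeff_coeff_summand p (mem_range.1 hk) _ hL]

lemma wordCoeff_coeff_sum_summand {r : ℕ} (i : ℕ) {L : List (Fin 2)} (hL : L.length = r) :
    wordCoeff p ((∑ k ∈ range r, summand p r k).coeff i) (FreeMonoid.ofList L) =
      if i = L.count 1 - 1 then (L.count 1 : ZMod p) else 0 := by
  rw [finsetSum_coeff, wordCoeff_sum,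
    sum_congr rfl fun k hk => wordCoeff_coeff_summand p (mem_range.1 hk) i hL]
  by_cases hi : i = L.count 1 - 1
  · simp [hi, sum_boole, ← hL, card_filter_getElem?_eq]
  · simp [hi]

end

theorem stmt_15_general (p : ℕ) [Fact p.Prime] (m : ℕ) (hm : 1 ≤ m) (c : ℕ)
    (hc2 : c ≤ p ^ (m - 1)) (a : Fin (c * p + 1) → ℕ)
    (ha : ∑ i, a i = p ^ m - c * p) :
    ((Finset.range (p ^ m)).filter fun k =>
        ∃ i : ℕ, wordCoeff p ((summand p (p ^ m) k).coeff i) (etaWord' (c * p) a) ≠ 0).card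
        = c * p ∧
    (∀ i : ℕ,
      wordCoeff p ((∑ k ∈ Finset.range (p ^ m), summand p (p ^ m) k).coeff i)
          (etaWord' (c * p) a) =
        if i = c * p - 1 then ((c * p : ℕ) : ZMod p) else 0) ∧
    ((c * p : ℕ) : ZMod p) = 0 := by
  have hv : c * p ≤ p ^ m := by
    calc c * p ≤ p ^ (m - 1) * p := Nat.mul_le_mul_right p hc2
      _ = p ^ m := pow_sub_one_mul (by omega) p
  have hlen : (etaWord' (c * p) a).toList.length = p ^ m := by
    rw [length_toList_etaWord', ha]
    omega
  have hcard := card_filter_exists_wordCoeff_coeff_summand_ne_zero p hlen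
  have hsum := fun i => wordCoeff_coeff_sum_summand p i hlen
  simp only [FreeMonoid.ofList_toList, count_toList_etaWord'] at hcard hsum
  exact ⟨hcard, hsum, by simp⟩

/-- Let `p` be prime, `r = p^m` and `v = c p` with `1 ≤ c ≤ p^{m-1}`.  For any
monomial `η = x^{a_0} y x^{a_1} ⋯ y x^{a_v}` with `v` occurrences of `y` and
`Σ aᵢ = r - v`, exactly `v` of the indices `k ∈ {0, …, r-1}` are such that
`(x+ty)^k y (x+ty)^{r-1-k}` contributes `η` with a nonzero `t`-coefficient,
and the total coefficient of `η` in `Σ_{k=0}^{r-1} (x+ty)^k y (x+ty)^{r-1-k}`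
is `v · t^{v-1}`, which vanishes mod `p` since `p ∣ v`. -/
theorem stmt_15 (p : ℕ) [Fact p.Prime] (m : ℕ) (hm : 1 ≤ m) (c : ℕ)
    (hc1 : 1 ≤ c) (hc2 : c ≤ p ^ (m - 1)) (a : Fin (c * p + 1) → ℕ)
    (ha : ∑ i, a i = p ^ m - c * p) :
    ((Finset.range (p ^ m)).filter fun k =>
        ∃ i : ℕ, wordCoeff p ((summand p (p ^ m) k).coeff i) (etaWord' (c * p) a) ≠ 0).card
        = c * p ∧
    (∀ i : ℕ,
      wordCoeff p ((∑ k ∈ Finset.range (p ^ m), summand p (p ^ m) k).coeff i)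
          (etaWord' (c * p) a) =
        if i = c * p - 1 then ((c * p : ℕ) : ZMod p) else 0) ∧
    ((c * p : ℕ) : ZMod p) = 0 :=
  stmt_15_general p m hm c hc2 a ha
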